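/- arXiv:2009.08147 — 14 statements merged into one kernel-verified Lean document; each statement's English description precedes it below -/
import Mathlib

section
/- Let X be a proper metric space and i : X → X̄ a compactification of X. Then X̄ is a coarse compactification (i.e. for every entourage E ⊆ X × X, the closure of (i × i)(E) in X̄ × X̄ meets (∂X × X̄) ∪ (X̄ × ∂X) only inside the diagonal {(p,p) : p ∈ ∂X}) if and only if for every two subsets A, B ⊆ X with A ≍ B, the closures of i(A) and i(B) in X̄ have nonempty intersection. -/
open Topology

/-- A subset `E ⊆ X × X` is an entourage if `sup_{(x,y) ∈ E} d(x,y) < ∞`. -/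
def IsEntourage {X : Type*} [MetricSpace X] (E : Set (X × X)) : Prop :=
  ∃ C : ℝ, ∀ p ∈ E, dist p.1 p.2 ≤ C

/-- `E[S] = {x | ∃ y ∈ S, (x,y) ∈ E}`. -/
def EImage {X : Type*} (E : Set (X × X)) (S : Set X) : Set X :=
  {x | ∃ y ∈ S, (x, y) ∈ E}

/-- Subsets `A, B` are close (`A ≍ B`): there are `R ≥ 0` and a sequence
`(aₙ, bₙ) ∈ A × B` with `d(aₙ, bₙ) ≤ R` and `{aₙ}` unbounded. -/
def Close {X : Type*} [MetricSpace X] (A B : Set X) : Prop :=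
  ∃ R : ℝ, 0 ≤ R ∧ ∃ a b : ℕ → X, (∀ n, a n ∈ A) ∧ (∀ n, b n ∈ B) ∧
    (∀ n, dist (a n) (b n) ≤ R) ∧ ¬ Bornology.IsBounded (Set.range a)

/-- `A ≍_f B` iff there do not exist `A' ⊇ A`, `B' ⊇ B` with `A' ∪ B' = X` and `¬(A' ≍ B')`. -/
def CloseF {X : Type*} [MetricSpace X] (A B : Set X) : Prop :=
  ¬ ∃ A' B' : Set X, A ⊆ A' ∧ B ⊆ B' ∧ A' ∪ B' = Set.univ ∧ ¬ Close A' B'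

/-- A large-scale proximity relation. -/
structure IsLSP {X : Type*} [MetricSpace X] (r : Set X → Set X → Prop) : Prop where
  not_self_iff_bounded : ∀ B : Set X, (¬ r B B) ↔ Bornology.IsBounded B
  symm : ∀ A B : Set X, r A B → r B A
  entourage_invariant : ∀ (A A' : Set X) (E : Set (X × X)), IsEntourage E →
    A' ⊆ EImage E A → A ⊆ EImage E A' → ∀ B : Set X, r A B → r A' B
  union_iff : ∀ A B C : Set X, r (A ∪ B) C ↔ (r A C ∨ r B C)
  separation : ∀ A B : Set X, ¬ r A B →
    ∃ C D : Set X, C ∪ D = Set.univ ∧ ¬ r C A ∧ ¬ r D B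

/-- An `r`-ultrafilter on `X`. -/
def IsRUltrafilter {X : Type*} (r : Set X → Set X → Prop) (F : Set (Set X)) : Prop :=
  (∀ A ∈ F, ∀ B ∈ F, r A B) ∧ (∀ A B : Set X, A ∪ B ∈ F → A ∈ F ∨ B ∈ F) ∧ Set.univ ∈ F

/-- A compactification `i : X → X̄` is coarse if for every entourage `E`, the closure of
`(i × i)(E)` meets `(∂X × X̄) ∪ (X̄ × ∂X)` only inside the diagonal over `∂X = X̄ ∖ i(X)`. -/
def IsCoarseCompactification {X Xb : Type*} [MetricSpace X] [TopologicalSpace Xb]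
    (i : X → Xb) : Prop :=
  ∀ E : Set (X × X), IsEntourage E →
    closure ((fun p : X × X => (i p.1, i p.2)) '' E) ∩
      (((Set.range i)ᶜ ×ˢ (Set.univ : Set Xb)) ∪ ((Set.univ : Set Xb) ×ˢ (Set.range i)ᶜ)) ⊆
      {q : Xb × Xb | q.1 = q.2 ∧ q.1 ∈ (Set.range i)ᶜ}

/-- A Higson function: bounded, continuous, and for every entourage `E` and `ε > 0`
there is a bounded set `B` outside of which the variation on `E` is `< ε`. -/
def IsHigson {X : Type*} [MetricSpace X] (φ : X → ℝ) : Prop :=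
  Continuous φ ∧ (∃ C : ℝ, ∀ x, |φ x| ≤ C) ∧
  ∀ E : Set (X × X), IsEntourage E → ∀ ε > (0:ℝ), ∃ B : Set X, Bornology.IsBounded B ∧
    ∀ p ∈ E, (p.1 ∉ B ∨ p.2 ∉ B) → |φ p.1 - φ p.2| < ε

/-- A coarse map: coarsely uniform and coarsely proper. -/
def IsCoarseMap {X Y : Type*} [MetricSpace X] [MetricSpace Y] (f : X → Y) : Prop :=
  (∀ E : Set (X × X), IsEntourage E →
    IsEntourage ((fun p : X × X => (f p.1, f p.2)) '' E)) ∧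
  (∀ S : Set Y, Bornology.IsBounded S → Bornology.IsBounded (f ⁻¹' S))

/-- The Gromov product `(x|y)_w`. -/
noncomputable def gromovProd {X : Type*} [MetricSpace X] (w x y : X) : ℝ :=
  (dist x w + dist y w - dist x y) / 2

/-- `X` is a geodesic metric space. -/
def IsGeodesicSpace (X : Type*) [MetricSpace X] : Prop :=
  ∀ x y : X, ∃ γ : ℝ → X, γ 0 = x ∧ γ (dist x y) = y ∧
    ∀ s ∈ Set.Icc (0:ℝ) (dist x y), ∀ t ∈ Set.Icc (0:ℝ) (dist x y),
      dist (γ s) (γ t) = |s - t|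

/-!
Forward: if `A ≍ B` via pairs `(aₙ, bₙ)` with `aₙ` unbounded, a cluster point `z` of
`(i aₙ, i bₙ)` along `aₙ → ∞` lies in `∂X × X̄` and in the closure of the image of the
entourage `{(aₙ, bₙ)}`, so coarseness puts it on the diagonal, in
`closure (i A) ∩ closure (i B)`.

Backward: if `(p, q)` with `p ≠ q` lies in the closure of `(i × i)(E)` with, say, `p ∈ ∂X`,
separate `p` and `q` by open sets `U`, `V` with disjoint closures. The pairs of `E` landing in
`U × V` still accumulate at `(p, q)`, hence are unbounded since closures of bounded sets stay
inside `i(X)` (`X` is proper); so their two coordinate sets are close, and their closures,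
lying in `closure U` and `closure V`, would have to meet.
-/

open Set Filter Bornology Metric Topology

section

variable {X Xb : Type*} [MetricSpace X] [TopologicalSpace Xb]

lemma neBot_comap_cobounded_of_not_isBounded_range {ι : Type*} {a : ι → X}
    (h : ¬ IsBounded (range a)) : (comap a (cobounded X)).NeBot :=
  comap_neBot_iff.2 fun t ht => by
    by_contra! hout
    exact h ((isBounded_compl_iff.2 ht).subset (range_subset_iff.2 hout))

lemma not_mem_range_of_clusterPt_of_tendsto_cobounded {ι : Type*} {l : Filter ι} {i : X → Xb}
    (hi : IsOpenEmbedding i) {u : ι → X} (hu : Tendsto u l (cobounded X)) {z : Xb}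
    (hz : ClusterPt z (map (i ∘ u) l)) : z ∉ range i := by
  rintro ⟨x, rfl⟩
  have hball : i '' ball x 1 ∈ 𝓝 (i x) :=
    (hi.isOpenMap _ isOpen_ball).mem_nhds (mem_image_of_mem i (mem_ball_self one_pos))
  have hfar : ∀ᶠ n in l, u n ∉ ball x 1 := hu (isBounded_def.1 isBounded_ball)
  obtain ⟨n, hin, hout⟩ := ((frequently_map.1 (hz.frequently hball)).and_eventually hfar).exists
  exact hout (hi.injective.mem_set_image.1 hin)

theorem IsCoarseCompactification.closure_inter_nonempty_of_close [CompactSpace Xb] {i : X → Xb}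
    (hc : IsCoarseCompactification i) (hi : IsOpenEmbedding i) {A B : Set X} (hAB : Close A B) :
    (closure (i '' A) ∩ closure (i '' B)).Nonempty := by
  obtain ⟨R, -, a, b, ha, hb, hab, hunb⟩ := hAB
  have := neBot_comap_cobounded_of_not_isBounded_range hunb
  obtain ⟨z, hz⟩ := exists_clusterPt_of_compactSpace
    (map (fun n => (i (a n), i (b n))) (comap a (cobounded X)))
  have hz₁ : z.1 ∉ range i :=
    not_mem_range_of_clusterPt_of_tendsto_cobounded hi tendsto_comap
      (hz.map continuous_fst.continuousAt tendsto_map)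
  have hzE : z ∈ closure ((fun p : X × X => (i p.1, i p.2)) '' range fun n => (a n, b n)) :=
    hz.mem_closure_of_mem _ (mem_map.2 (univ_mem' fun n => ⟨(a n, b n), mem_range_self n, rfl⟩))
  have hzAB : z ∈ closure (i '' A) ×ˢ closure (i '' B) := by
    rw [← closure_prod_eq]
    exact hz.mem_closure_of_mem _
      (mem_map.2 (univ_mem' fun n => ⟨mem_image_of_mem i (ha n), mem_image_of_mem i (hb n)⟩))
  have hdiag := hc _ ⟨R, forall_mem_range.2 hab⟩ ⟨hzE, Or.inl ⟨hz₁, trivial⟩⟩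
  exact ⟨z.1, hzAB.1, hdiag.1 ▸ hzAB.2⟩

lemma IsEntourage.isBounded_snd_image {E : Set (X × X)} (hE : IsEntourage E)
    (h : IsBounded (Prod.fst '' E)) : IsBounded (Prod.snd '' E) := by
  obtain ⟨C, hC⟩ := hE
  refine (h.cthickening (δ := C)).subset ?_
  rintro _ ⟨p, hp, rfl⟩
  exact mem_cthickening_of_dist_le _ p.1 C _ (mem_image_of_mem _ hp) (dist_comm p.1 p.2 ▸ hC p hp)

lemma IsEntourage.close_fst_snd {E : Set (X × X)} (hE : IsEntourage E)
    (h : ¬ IsBounded (Prod.fst '' E)) : Close (Prod.fst '' E) (Prod.snd '' E) := by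
  obtain ⟨C, hC⟩ := hE
  obtain ⟨x₀, -⟩ := nonempty_of_not_isBounded h
  have hfar : ∀ n : ℕ, ∃ p ∈ E, (n : ℝ) < dist p.1 x₀ := by
    intro n
    by_contra! hnear
    exact h (isBounded_closedBall.subset (by rintro _ ⟨p, hp, rfl⟩; exact hnear p hp))
  choose e heE he using hfar
  refine ⟨max C 0, le_max_right _ _, fun n => (e n).1, fun n => (e n).2,
    fun n => mem_image_of_mem _ (heE n), fun n => mem_image_of_mem _ (heE n),
    fun n => le_max_of_le_left (hC _ (heE n)), fun hbdd => ?_⟩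
  obtain ⟨r, hr⟩ := (isBounded_iff_subset_closedBall x₀).1 hbdd
  obtain ⟨N, hN⟩ := exists_nat_ge r
  exact (he N).not_ge ((mem_closedBall.1 (hr (mem_range_self N))).trans hN)

lemma not_isBounded_of_mem_closure_image [ProperSpace X] [T2Space Xb] {i : X → Xb}
    (hi : Continuous i) {S : Set X} {p : Xb} (hp : p ∈ closure (i '' S)) (hpi : p ∉ range i) :
    ¬ IsBounded S := fun hS =>
  hpi <| image_subset_range i _ <|
    closure_minimal (image_mono subset_closure) (hS.isCompact_closure.image hi).isClosed hp

lemma eq_of_mem_closure_image_entourage [ProperSpace X] [T25Space Xb]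
    {i : X → Xb} (hi : Continuous i)
    (hclose : ∀ A B : Set X, Close A B → (closure (i '' A) ∩ closure (i '' B)).Nonempty)
    {E : Set (X × X)} (hE : IsEntourage E) {p q : Xb}
    (hpq : (p, q) ∈ closure ((fun x : X × X => (i x.1, i x.2)) '' E))
    (hbd : p ∉ range i ∨ q ∉ range i) : p = q := by
  by_contra hne
  obtain ⟨U, hpU, hU, V, hqV, hV, hUV⟩ := exists_open_nhds_disjoint_closure hne
  set E' := E ∩ ((i ⁻¹' U) ×ˢ (i ⁻¹' V))
  have hE' : IsEntourage E' := let ⟨C, hC⟩ := hE; ⟨C, fun x hx => hC x hx.1⟩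
  have hpq' : (p, q) ∈ closure ((fun x : X × X => (i x.1, i x.2)) '' E') := by
    have := (hU.prod hV).inter_closure ⟨⟨hpU, hqV⟩, hpq⟩
    rwa [inter_comm, ← image_inter_preimage] at this
  have hunb : ¬ IsBounded (Prod.fst '' E') := by
    rcases hbd with hp | hq
    · refine not_isBounded_of_mem_closure_image hi
        (map_mem_closure continuous_fst hpq' ?_) hp
      rintro _ ⟨x, hx, rfl⟩
      exact mem_image_of_mem i (mem_image_of_mem _ hx)
    · refine fun h => not_isBounded_of_mem_closure_image hi
        (map_mem_closure continuous_snd hpq' ?_) hq (hE'.isBounded_snd_image h)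
      rintro _ ⟨x, hx, rfl⟩
      exact mem_image_of_mem i (mem_image_of_mem _ hx)
  obtain ⟨w, hwU, hwV⟩ := hclose _ _ (hE'.close_fst_snd hunb)
  refine hUV.ne_of_mem (closure_mono ?_ hwU) (closure_mono ?_ hwV) rfl
  · rintro _ ⟨_, ⟨x, hx, rfl⟩, rfl⟩
    exact hx.2.1
  · rintro _ ⟨_, ⟨x, hx, rfl⟩, rfl⟩
    exact hx.2.2

end

theorem coarse_iff_close_closures_meet_general {X Xb : Type*} [MetricSpace X] [ProperSpace X]
    [TopologicalSpace Xb] [CompactSpace Xb] [T2Space Xb]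
    (i : X → Xb) (hi : IsOpenEmbedding i) :
    IsCoarseCompactification i ↔
      ∀ A B : Set X, Close A B → (closure (i '' A) ∩ closure (i '' B)).Nonempty := by
  refine ⟨fun hc A B => hc.closure_inter_nonempty_of_close hi,
    fun hclose E hE ⟨p, q⟩ ⟨hpq, hbd⟩ => ?_⟩
  have hbd' : p ∉ range i ∨ q ∉ range i := hbd.imp (·.1) (·.2)
  have hpq_eq := eq_of_mem_closure_image_entourage hi.continuous hclose hE hpq hbd'
  exact ⟨hpq_eq, hbd'.elim id (hpq_eq ▸ ·)⟩

/-- A compactification of a proper metric space is coarse iff for all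
`A ≍ B` the closures of `i(A)` and `i(B)` meet. -/
theorem coarse_iff_close_closures_meet {X Xb : Type*} [MetricSpace X] [ProperSpace X]
    [TopologicalSpace Xb] [CompactSpace Xb] [T2Space Xb]
    (i : X → Xb) (hi : IsOpenEmbedding i) (hd : DenseRange i) :
    IsCoarseCompactification i ↔
      ∀ A B : Set X, Close A B → (closure (i '' A) ∩ closure (i '' B)).Nonempty :=
  coarse_iff_close_closures_meet_general i hi
end

section
/- Let X be a metric space and r a large-scale proximity relation on X. Then r is finer than the close relation: for all subsets A, B ⊆ X, if A ≍ B then A r B. -/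
/-!
An unbounded set `A₀ = {aₙ}` satisfies `A₀ r A₀`, and `B₀ = {bₙ}` lies within the entourage
`{d ≤ R}` of `A₀` and vice versa, so entourage invariance gives `B₀ r A₀`. Since `r` is monotone
(a consequence of the union axiom), `A₀ ⊆ A` and `B₀ ⊆ B` then yield `A r B`.
-/

open Topology

open Set

theorem isEntourage_dist_le {X : Type*} [MetricSpace X] (R : ℝ) :
    IsEntourage {p : X × X | dist p.1 p.2 ≤ R} :=
  ⟨R, fun _ hp => hp⟩

namespace IsLSP

variable {X : Type*} [MetricSpace X] {r : Set X → Set X → Prop}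

theorem mono_left (hr : IsLSP r) {A A' B : Set X} (hA : A ⊆ A') (h : r A B) : r A' B := by
  simpa only [union_eq_self_of_subset_left hA] using (hr.union_iff A A' B).2 (Or.inl h)

theorem mono (hr : IsLSP r) {A A' B B' : Set X} (hA : A ⊆ A') (hB : B ⊆ B') (h : r A B) :
    r A' B' :=
  hr.symm _ _ (hr.mono_left hB (hr.symm _ _ (hr.mono_left hA h)))

theorem self_of_not_isBounded (hr : IsLSP r) {A : Set X} (hA : ¬Bornology.IsBounded A) :
    r A A :=
  by_contra fun h => hA ((hr.not_self_iff_bounded A).1 h)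

theorem range_of_dist_le (hr : IsLSP r) {ι : Type*} {a b : ι → X} {R : ℝ}
    (hd : ∀ i, dist (a i) (b i) ≤ R) {C : Set X} (h : r (range a) C) : r (range b) C := by
  refine hr.entourage_invariant _ _ _ (isEntourage_dist_le R) ?_ ?_ C h
  · rintro _ ⟨i, rfl⟩
    exact ⟨a i, mem_range_self i, by simpa only [mem_ofPred_eq, dist_comm] using hd i⟩
  · rintro _ ⟨i, rfl⟩
    exact ⟨b i, mem_range_self i, hd i⟩

end IsLSP

/-- every large-scale proximity relation is finer than the close relation. -/
theorem lsp_finer_than_close {X : Type*} [MetricSpace X]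
    (r : Set X → Set X → Prop) (hr : IsLSP r) :
    ∀ A B : Set X, Close A B → r A B := by
  rintro A B ⟨R, -, a, b, ha, hb, hd, hunb⟩
  have hab : r (range a) (range b) :=
    hr.symm _ _ (hr.range_of_dist_le hd (hr.self_of_not_isBounded hunb))
  exact hr.mono (range_subset_iff.2 ha) (range_subset_iff.2 hb) hab
end

section
/- Let X be a metric space and r a large-scale proximity relation on X. Define, for ultrafilters F, G on X, F λ_r G if A r B holds for all A ∈ F and B ∈ G. Then λ_r is transitive on nonprincipal ultrafilters: if F₁, F₂, F₃ are nonprincipal ultrafilters on X with F₁ λ_r F₂ and F₂ λ_r F₃, then F₁ λ_r F₃. -/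
open Topology

theorem IsLSP.rel_of_forall_mem_ultrafilter {X : Type*} [MetricSpace X]
    {r : Set X → Set X → Prop} (hr : IsLSP r) (G : Ultrafilter X) {A B : Set X}
    (hA : ∀ C ∈ G, r A C) (hB : ∀ C ∈ G, r C B) : r A B := by
  by_contra hAB
  obtain ⟨C, D, hCD, hCA, hDB⟩ := hr.separation A B hAB
  have hCD_mem : C ∪ D ∈ G := hCD ▸ Filter.univ_mem
  rcases Ultrafilter.union_mem_iff.mp hCD_mem with hC | hD
  · exact hCA (hr.symm A C (hA C hC))
  · exact hDB (hB D hD)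

theorem lambda_r_transitive_general {X : Type*} [MetricSpace X]
    (r : Set X → Set X → Prop) (hr : IsLSP r)
    (F₁ F₂ F₃ : Ultrafilter X)
    (h12 : ∀ A ∈ F₁, ∀ B ∈ F₂, r A B) (h23 : ∀ A ∈ F₂, ∀ B ∈ F₃, r A B) :
    ∀ A ∈ F₁, ∀ B ∈ F₃, r A B :=
  fun A hA B hB => hr.rel_of_forall_mem_ultrafilter F₂ (h12 A hA) (fun C hC => h23 C hC B hB)

/-- the relation `λ_r` is transitive on nonprincipal ultrafilters. -/
theorem lambda_r_transitive {X : Type*} [MetricSpace X]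
    (r : Set X → Set X → Prop) (hr : IsLSP r)
    (F₁ F₂ F₃ : Ultrafilter X)
    (h₁ : ∀ x : X, F₁ ≠ pure x) (h₂ : ∀ x : X, F₂ ≠ pure x) (h₃ : ∀ x : X, F₃ ≠ pure x)
    (h12 : ∀ A ∈ F₁, ∀ B ∈ F₂, r A B) (h23 : ∀ A ∈ F₂, ∀ B ∈ F₃, r A B) :
    ∀ A ∈ F₁, ∀ B ∈ F₃, r A B :=
  lambda_r_transitive_general r hr F₁ F₂ F₃ h12 h23
end

section
/- Let X be a metric space and r a large-scale proximity relation on X. Let F and G be r-ultrafilters on X such that there exist A ∈ F and B ∈ G with ¬(A r B). Then there exist subsets C, D ⊆ X with C ∪ D = X, C ∉ F, D ∉ G, and such that every r-ultrafilter on X contains C or contains D. -/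
open Topology

namespace IsRUltrafilter

variable {X : Type*} {r : Set X → Set X → Prop} {F : Set (Set X)}

theorem mem_or_mem_of_union_eq_univ (hF : IsRUltrafilter r F) {C D : Set X}
    (hCD : C ∪ D = Set.univ) : C ∈ F ∨ D ∈ F :=
  hF.2.1 C D (hCD ▸ hF.2.2)

theorem notMem_of_not_rel (hF : IsRUltrafilter r F) {A C : Set X} (hA : A ∈ F)
    (hCA : ¬ r C A) : C ∉ F :=
  fun hC => hCA (hF.1 C hC A hA)

end IsRUltrafilter

/-- separation of `r`-ultrafilters. -/
theorem rUltrafilter_separation {X : Type*} [MetricSpace X]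
    (r : Set X → Set X → Prop) (hr : IsLSP r)
    (F G : Set (Set X)) (hF : IsRUltrafilter r F) (hG : IsRUltrafilter r G)
    (A B : Set X) (hA : A ∈ F) (hB : B ∈ G) (hAB : ¬ r A B) :
    ∃ C D : Set X, C ∪ D = Set.univ ∧ C ∉ F ∧ D ∉ G ∧
      ∀ H : Set (Set X), IsRUltrafilter r H → C ∈ H ∨ D ∈ H := by
  obtain ⟨C, D, hCD, hCA, hDB⟩ := hr.separation A B hAB
  exact ⟨C, D, hCD, hF.notMem_of_not_rel hA hCA, hG.notMem_of_not_rel hB hDB,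
    fun H hH => hH.mem_or_mem_of_union_eq_univ hCD⟩
end

section
/- Let X be a proper metric space and i : X → X̄ a coarse compactification of X with boundary ∂X = X̄ ∖ i(X). Define a relation r on subsets of X by: A r B iff (closure of i(A) in X̄) ∩ (closure of i(B) in X̄) ∩ ∂X ≠ ∅. Then r is a large-scale proximity relation on X. -/
open Topology

/-!
A point of the boundary lying in the closure of `i(A)` stays in the closure of `i(A')` whenever
`A` lies in a bounded neighbourhood of `A'`: if `i(aₙ) → p` with partners `a'ₙ ∈ A'` at bounded
distance, a limit point `q` of `i(a'ₙ)` gives `(p, q)` in the closure of an entourage, and coarseness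
forces `q = p`. Boundedness of `B` amounts to the closure of `i(B)` missing the boundary, by
properness of `X` and compactness of `X̄`. Separation comes from separating the disjoint compact
boundary traces of `A` and `B` by disjoint open sets `U`, `V` and pulling back their complements.
-/

open Set Filter

theorem exists_union_eq_univ_disjoint_closure_image {X Xb : Type*} [TopologicalSpace Xb]
    [T2Space Xb] (i : X → Xb) {K L : Set Xb}
    (hK : IsCompact K) (hL : IsCompact L) (hKL : Disjoint K L) :
    ∃ C D : Set X, C ∪ D = univ ∧ Disjoint (closure (i '' C)) K ∧
      Disjoint (closure (i '' D)) L := by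
  obtain ⟨U, V, hU, hV, hKU, hLV, hUV⟩ := SeparatedNhds.of_isCompact_isCompact hK hL hKL
  have closure_image_preimage_compl {W : Set Xb} (hW : IsOpen W) :
      closure (i '' (i ⁻¹' Wᶜ)) ⊆ Wᶜ :=
    closure_minimal (image_preimage_subset i _) hW.isClosed_compl
  refine ⟨i ⁻¹' Uᶜ, i ⁻¹' Vᶜ, ?_, ?_, ?_⟩
  · rw [← preimage_union, ← compl_inter, hUV.inter_eq, compl_empty, preimage_univ]
  · exact disjoint_compl_left.mono (closure_image_preimage_compl hU) hKU
  · exact disjoint_compl_left.mono (closure_image_preimage_compl hV) hLV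

section

variable {X Xb : Type*} [MetricSpace X] [TopologicalSpace Xb]

theorem closure_image_subset_range_iff_isBounded [ProperSpace X] [CompactSpace Xb] [T2Space Xb]
    {i : X → Xb} (hi : IsEmbedding i) {B : Set X} :
    closure (i '' B) ⊆ range i ↔ Bornology.IsBounded B := by
  constructor
  · intro hsub
    have hK : IsCompact (i ⁻¹' closure (i '' B)) :=
      (hi.isInducing.isCompact_preimage_iff hsub).2 isClosed_closure.isCompact
    exact hK.isBounded.subset (subset_preimage_image i B |>.trans (preimage_mono subset_closure))
  · intro hB
    have hclosed : IsClosed (i '' closure B) :=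
      (hB.isCompact_closure.image hi.continuous).isClosed
    exact (closure_minimal (image_mono subset_closure) hclosed).trans (image_subset_range i _)

theorem IsCoarseCompactification.mem_closure_image_of_subset_eImage [CompactSpace Xb]
    {i : X → Xb} (hc : IsCoarseCompactification i) {E : Set (X × X)} (hE : IsEntourage E)
    {A A' : Set X} (hAE : A ⊆ EImage E A') {p : Xb} (hp : p ∈ closure (i '' A))
    (hpb : p ∉ range i) : p ∈ closure (i '' A') := by
  set P := E ∩ A ×ˢ A'
  set F := comap (fun x : X × X => i x.1) (𝓝 p) ⊓ 𝓟 P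
  have : F.NeBot := by
    refine inf_principal_neBot_iff.2 fun U ⟨t, ht, htU⟩ => ?_
    obtain ⟨_, hta, a, ha, rfl⟩ := mem_closure_iff_nhds.1 hp t ht
    obtain ⟨b, hb, hab⟩ := hAE ha
    exact ⟨(a, b), htU hta, hab, ha, hb⟩
  set V := Ultrafilter.of F
  have hPV : P ∈ V := Ultrafilter.of_le F (mem_inf_of_right (mem_principal_self P))
  have hfst : Tendsto (fun x : X × X => i x.1) V (𝓝 p) :=
    tendsto_comap.mono_left ((Ultrafilter.of_le F).trans inf_le_left)
  obtain ⟨q, -, hsnd⟩ :=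
    isCompact_univ.ultrafilter_le_nhds (V.map fun x : X × X => i x.2) (by simp)
  have hpq : (p, q) ∈ closure ((fun x : X × X => (i x.1, i x.2)) '' E) :=
    mem_closure_of_tendsto (hfst.prodMk_nhds hsnd)
      (eventually_of_mem hPV fun x hx => mem_image_of_mem _ hx.1)
  obtain ⟨hpq_eq, -⟩ := hc E hE ⟨hpq, Or.inl ⟨hpb, trivial⟩⟩
  rw [show p = q from hpq_eq]
  exact mem_closure_of_tendsto hsnd (eventually_of_mem hPV fun x hx => mem_image_of_mem _ hx.2.2)

end

theorem coarseCompactification_relation_isLSP_general {X Xb : Type*} [MetricSpace X] [ProperSpace X]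
    [TopologicalSpace Xb] [CompactSpace Xb] [T2Space Xb]
    (i : X → Xb) (hi : IsOpenEmbedding i)
    (hc : IsCoarseCompactification i) :
    IsLSP (fun A B : Set X =>
      (closure (i '' A) ∩ closure (i '' B) ∩ (Set.range i)ᶜ).Nonempty) := by
  have boundary_trace_isCompact (A : Set X) : IsCompact (closure (i '' A) ∩ (range i)ᶜ) :=
    (isClosed_closure.inter hi.isOpen_range.isClosed_compl).isCompact
  refine ⟨fun B => ?_, fun A B => ?_, fun A A' E hE _ hAE B => ?_, fun A B C => ?_,
    fun A B hAB => ?_⟩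
  · rw [inter_self, inter_compl_nonempty_iff, not_not,
      closure_image_subset_range_iff_isBounded hi.isEmbedding]
  · rw [inter_comm (closure (i '' A))]
    exact id
  · rintro ⟨p, ⟨hpA, hpB⟩, hpb⟩
    exact ⟨p, ⟨hc.mem_closure_image_of_subset_eImage hE hAE hpA hpb, hpB⟩, hpb⟩
  · rw [image_union, closure_union, union_inter_distrib_right, union_inter_distrib_right,
      union_nonempty]
  · have hdisj : Disjoint (closure (i '' A) ∩ (range i)ᶜ) (closure (i '' B) ∩ (range i)ᶜ) :=
      disjoint_left.2 fun p ⟨hpA, hpb⟩ ⟨hpB, _⟩ => hAB ⟨p, ⟨hpA, hpB⟩, hpb⟩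
    obtain ⟨C, D, hCD, hC, hD⟩ := exists_union_eq_univ_disjoint_closure_image i
      (boundary_trace_isCompact A) (boundary_trace_isCompact B) hdisj
    exact ⟨C, D, hCD, fun ⟨p, ⟨hpC, hpA⟩, hpb⟩ => disjoint_left.1 hC hpC ⟨hpA, hpb⟩,
      fun ⟨p, ⟨hpD, hpB⟩, hpb⟩ => disjoint_left.1 hD hpD ⟨hpB, hpb⟩⟩

/-- the relation "closures meet on the boundary" of a coarse
compactification is a large-scale proximity relation. -/
theorem coarseCompactification_relation_isLSP {X Xb : Type*} [MetricSpace X] [ProperSpace X]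
    [TopologicalSpace Xb] [CompactSpace Xb] [T2Space Xb]
    (i : X → Xb) (hi : IsOpenEmbedding i) (hd : DenseRange i)
    (hc : IsCoarseCompactification i) :
    IsLSP (fun A B : Set X =>
      (closure (i '' A) ∩ closure (i '' B) ∩ (Set.range i)ᶜ).Nonempty) :=
  coarseCompactification_relation_isLSP_general i hi hc
end

section
/- Let X be a proper metric space and i : X → X̄ a compactification. Then X̄ is a coarse compactification if and only if for every continuous function ψ : X̄ → ℝ, the restriction φ = ψ ∘ i : X → ℝ is a Higson function. -/
open Topology

/-!
Both sides can be tested one continuous `ψ : X̄ → ℝ` and one entourage `E` at a time.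
Follow the pairs `p ∈ E` whose first coordinate leaves every bounded set. The limit points of
`(i p.1, i p.2)` in the compact space `X̄ × X̄` are exactly the points of `closure ((i × i) E)`
with first coordinate in `∂X`: points of `i(X)` have neighbourhoods with bounded preimage, and
bounded sets have compact, hence closed, images. So `ψ ∘ i` has small variation on `E` outside
bounded sets iff `ψ` takes equal values at the two coordinates of each such point. Continuous
functions separate the points of the compact Hausdorff space `X̄`, so this holds for every `ψ`
iff all these points lie on the diagonal, which is coarseness (a second coordinate in `∂X` is
handled by swapping `E`).
-/

open Filter Bornology Set

section

variable {X Y : Type*} [MetricSpace X] [TopologicalSpace Y]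

lemma IsEntourage.preimage_swap {E : Set (X × X)} (hE : IsEntourage E) :
    IsEntourage (Prod.swap ⁻¹' E) := by
  obtain ⟨C, hC⟩ := hE
  exact ⟨C, fun p hp => dist_comm p.1 p.2 ▸ hC _ hp⟩

lemma eventually_comap_fst_cobounded_inf_principal_iff {E : Set (X × X)} {P : X × X → Prop} :
    (∀ᶠ p in comap Prod.fst (cobounded X) ⊓ 𝓟 E, P p) ↔
      ∃ B : Set X, IsBounded B ∧ ∀ p ∈ E, p.1 ∉ B → P p := by
  simp only [Filter.Eventually, mem_inf_principal, mem_comap, isBounded_def]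
  constructor
  · rintro ⟨t, ht, hsub⟩
    exact ⟨tᶜ, by rwa [compl_compl], fun p hp hp1 => hsub (not_not.1 hp1) hp⟩
  · rintro ⟨B, hB, hP⟩
    exact ⟨Bᶜ, hB, fun p hp hpE => hP p hpE hp⟩

lemma isHigson_iff_tendsto {φ : X → ℝ} :
    IsHigson φ ↔ Continuous φ ∧ (∃ C : ℝ, ∀ x, |φ x| ≤ C) ∧
      ∀ E : Set (X × X), IsEntourage E →
        Tendsto (fun p : X × X => φ p.1 - φ p.2) (comap Prod.fst (cobounded X) ⊓ 𝓟 E)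
          (𝓝 0) := by
  simp only [Metric.tendsto_nhds, Real.dist_0_eq_abs,
    eventually_comap_fst_cobounded_inf_principal_iff]
  refine and_congr_right' (and_congr_right' ⟨fun h E hE ε hε => ?_, fun h E hE ε hε => ?_⟩)
  · obtain ⟨B, hB, hφ⟩ := h E hE ε hε
    exact ⟨B, hB, fun p hp hp1 => hφ p hp (Or.inl hp1)⟩
  · obtain ⟨B₁, hB₁, hφ₁⟩ := h E hE ε hε
    obtain ⟨B₂, hB₂, hφ₂⟩ := h _ hE.preimage_swap ε hε
    refine ⟨B₁ ∪ B₂, hB₁.union hB₂, fun p hp hout => ?_⟩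
    rcases hout with hp1 | hp2
    · exact hφ₁ p hp (fun h => hp1 (Or.inl h))
    · rw [abs_sub_comm]
      exact hφ₂ p.swap hp (fun h => hp2 (Or.inr h))

lemma Topology.IsOpenEmbedding.disjoint_nhds_map_cobounded {i : X → Y} (hi : IsOpenEmbedding i)
    (x : X) : Disjoint (𝓝 (i x)) (map i (cobounded X)) :=
  disjoint_of_disjoint_of_mem ((disjoint_image_iff hi.injective).2 disjoint_compl_right)
    (hi.isOpenMap.image_mem_nhds (Metric.ball_mem_nhds x one_pos))
    (image_mem_map (isBounded_def.1 Metric.isBounded_ball))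

lemma comap_nhds_le_cobounded_of_notMem_range [ProperSpace X] [T2Space Y] {i : X → Y}
    (hi : Continuous i) {y : Y} (hy : y ∉ range i) : comap i (𝓝 y) ≤ cobounded X := by
  intro s hs
  have hK : IsCompact (i '' closure sᶜ) := (isBounded_compl_iff.2 hs).isCompact_closure.image hi
  refine ⟨(i '' closure sᶜ)ᶜ,
    hK.isClosed.isOpen_compl.mem_nhds fun h => hy (image_subset_range _ _ h), ?_⟩
  intro x hx
  by_contra hxs
  exact hx ⟨x, subset_closure hxs, rfl⟩

def closureOverBoundary (i : X → Y) (E : Set (X × X)) : Set (Y × Y) :=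
  closure ((fun p : X × X => (i p.1, i p.2)) '' E) ∩ (range i)ᶜ ×ˢ univ

lemma isCoarseCompactification_iff {i : X → Y} :
    IsCoarseCompactification i ↔
      ∀ E : Set (X × X), IsEntourage E → ∀ q ∈ closureOverBoundary i E, q.1 = q.2 := by
  refine ⟨fun h E hE q ⟨hq, hq1⟩ => (h E hE ⟨hq, Or.inl hq1⟩).1, ?_⟩
  rintro h E hE q ⟨hq, hq1 | hq2⟩
  · exact ⟨h E hE q ⟨hq, hq1⟩, hq1.1⟩
  · have hswap : q.swap ∈ closure ((fun p : X × X => (i p.1, i p.2)) '' (Prod.swap ⁻¹' E)) :=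
      map_mem_closure continuous_swap hq (by rintro _ ⟨p, hp, rfl⟩; exact ⟨p.swap, hp, rfl⟩)
    have heq : q.2 = q.1 := h _ hE.preimage_swap q.swap ⟨hswap, hq2.2, trivial⟩
    exact ⟨heq.symm, heq ▸ hq2.2⟩

lemma mem_closureOverBoundary_of_mapClusterPt {i : X → Y} (hi : IsOpenEmbedding i)
    {E : Set (X × X)} {q : Y × Y}
    (hq : MapClusterPt q (comap Prod.fst (cobounded X) ⊓ 𝓟 E) fun p => (i p.1, i p.2)) :
    q ∈ closureOverBoundary i E := by
  refine ⟨?_, ?_, trivial⟩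
  · rw [mem_closure_iff_clusterPt, ← map_principal]
    exact hq.mono inf_le_right
  · rintro ⟨x, hx⟩
    have h1 : MapClusterPt q.1 (comap Prod.fst (cobounded X)) (i ∘ Prod.fst) :=
      (hq.continuousAt_comp continuous_fst.continuousAt).mono inf_le_left
    rw [mapClusterPt_def, ← map_map, ← hx] at h1
    exact clusterPt_iff_not_disjoint.1 (h1.mono (map_mono map_comap_le))
      (hi.disjoint_nhds_map_cobounded x)

lemma tendsto_sub_comp_iff_eq_on_closureOverBoundary [ProperSpace X] [CompactSpace Y]
    [T2Space Y] {i : X → Y} (hi : IsOpenEmbedding i) {ψ : Y → ℝ} (hψ : Continuous ψ)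
    (E : Set (X × X)) :
    Tendsto (fun p : X × X => ψ (i p.1) - ψ (i p.2)) (comap Prod.fst (cobounded X) ⊓ 𝓟 E)
      (𝓝 0) ↔ ∀ q ∈ closureOverBoundary i E, ψ q.1 = ψ q.2 := by
  set f : X × X → Y × Y := fun p => (i p.1, i p.2)
  have hg : Continuous fun q : Y × Y => ψ q.1 - ψ q.2 :=
    (hψ.comp continuous_fst).sub (hψ.comp continuous_snd)
  constructor
  · rintro h q ⟨hq, hq1, -⟩
    set G := comap f (𝓝 q) ⊓ 𝓟 E
    have : NeBot G := by
      rw [neBot_inf_comap_iff_map', map_principal]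
      exact mem_closure_iff_clusterPt.1 hq
    have hGq : Tendsto f G (𝓝 q) := tendsto_comap.mono_left inf_le_left
    have hGi : Tendsto (i ∘ Prod.fst) G (𝓝 q.1) := (continuous_fst.tendsto q).comp hGq
    have hGfst : Tendsto Prod.fst G (cobounded X) :=
      (tendsto_comap_iff.2 hGi).mono_right
        (comap_nhds_le_cobounded_of_notMem_range hi.continuous hq1)
    have hG : G ≤ comap Prod.fst (cobounded X) ⊓ 𝓟 E := le_inf hGfst.le_comap inf_le_right
    exact sub_eq_zero.1 (tendsto_nhds_unique ((hg.tendsto q).comp hGq) (h.mono_left hG))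
  · intro h
    have hf :
        Tendsto f (comap Prod.fst (cobounded X) ⊓ 𝓟 E) (𝓝ˢ (closureOverBoundary i E)) :=
      isCompact_univ.tendsto_nhdsSet_of_mapClusterPt (Eventually.of_forall fun _ => mem_univ _)
        fun q _ hq => mem_closureOverBoundary_of_mapClusterPt hi hq
    exact (hg.tendsto_nhdsSet_nhds fun q hq => sub_eq_zero.2 (h q hq)).comp hf

end

theorem coarse_iff_restrictions_higson_general {X Xb : Type*} [MetricSpace X] [ProperSpace X]
    [TopologicalSpace Xb] [CompactSpace Xb] [T2Space Xb]
    (i : X → Xb) (hi : IsOpenEmbedding i) :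
    IsCoarseCompactification i ↔
      ∀ ψ : Xb → ℝ, Continuous ψ → IsHigson (ψ ∘ i) := by
  simp only [isCoarseCompactification_iff, isHigson_iff_tendsto, Function.comp_apply]
  constructor
  · intro hc ψ hψ
    obtain ⟨C, hC⟩ := isCompact_univ.exists_bound_of_continuousOn hψ.continuousOn
    refine ⟨hψ.comp hi.continuous, ⟨C, fun x => hC (i x) trivial⟩, fun E hE => ?_⟩
    exact (tendsto_sub_comp_iff_eq_on_closureOverBoundary hi hψ E).2
      fun q hq => congrArg ψ (hc E hE q hq)
  · intro h E hE q hq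
    by_contra hne
    obtain ⟨ψ, hψ, hψq⟩ := separatesPoints_continuous_of_t35Space hne
    exact hψq
      ((tendsto_sub_comp_iff_eq_on_closureOverBoundary hi hψ E).1 ((h ψ hψ).2.2 E hE) q hq)

/-- a compactification is coarse iff every continuous `ψ : X̄ → ℝ`
restricts to a Higson function on `X`. -/
theorem coarse_iff_restrictions_higson {X Xb : Type*} [MetricSpace X] [ProperSpace X]
    [TopologicalSpace Xb] [CompactSpace Xb] [T2Space Xb]
    (i : X → Xb) (hi : IsOpenEmbedding i) (hd : DenseRange i) :
    IsCoarseCompactification i ↔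
      ∀ ψ : Xb → ℝ, Continuous ψ → IsHigson (ψ ∘ i) :=
  coarse_iff_restrictions_higson_general i hi
end

section
/- Let X be a proper metric space with at most one end. Then for every coarse compactification i : X → X̄ of X, the boundary ∂X = X̄ ∖ i(X) is a preconnected subspace of X̄. -/
/-!
Let disjoint closed sets `F, G` cover `∂X` and separate them by disjoint open sets `U ⊇ F`,
`V ⊇ G` of `X̄`. Since `X` has at most one end, `A = i⁻¹ U` is bounded, or its complement (which
contains `i⁻¹ V`) is bounded, or `A ≍ Aᶜ`. The last case is impossible: along pairs `aₙ ∈ A`,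
`bₙ ∉ A` at bounded distance with `aₙ → ∞`, a cluster point of `(i aₙ, i bₙ)` is of the form
`(p, p)` with `p ∈ ∂X` by coarseness, and `p` can lie neither in `U` (which the `i bₙ` avoid) nor
in `V` (which the `i aₙ ∈ U` avoid). Finally, an open set with bounded preimage misses `∂X`, so
`∂X` lies in `G` or in `F`.
-/

open Topology

open Filter Bornology Set

section CoarseCompactification

variable {X Xb : Type*} [MetricSpace X] [TopologicalSpace Xb] {i : X → Xb}

lemma disjoint_boundary_of_isBounded_preimage [ProperSpace X] [T2Space Xb] (hi : Continuous i)
    (hd : DenseRange i) {U : Set Xb} (hU : IsOpen U) (hb : IsBounded (i ⁻¹' U)) :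
    Disjoint (range i)ᶜ U := by
  refine disjoint_left.2 fun p hp hpU => hp ?_
  have hclosed : IsClosed (i '' closure (i ⁻¹' U)) := (hb.isCompact_closure.image hi).isClosed
  have hpcl : p ∈ closure (i '' (i ⁻¹' U)) := by
    rw [image_preimage_eq_inter_range]
    exact hd.open_subset_closure_inter hU hpU
  exact image_subset_range _ _ (closure_minimal (image_mono subset_closure) hclosed hpcl)

lemma notMem_range_of_mapClusterPt_of_tendsto_cobounded (hi : IsOpenEmbedding i) {ι : Type*}
    {l : Filter ι} {a : ι → X} (ha : Tendsto a l (cobounded X)) {p : Xb}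
    (hp : MapClusterPt p l (i ∘ a)) : p ∉ range i := by
  rintro ⟨x, rfl⟩
  have hfreq : ∃ᶠ k in l, a k ∈ Metric.ball x 1 :=
    (hp.frequently (hi.isOpenMap.image_mem_nhds (Metric.ball_mem_nhds x one_pos))).mono
      fun k hk => hi.injective.mem_set_image.1 hk
  have hev : ∀ᶠ k in l, a k ∉ Metric.ball x 1 :=
    ha (isBounded_def.1 Metric.isBounded_ball)
  obtain ⟨k, hin, hout⟩ := (hfreq.and_eventually hev).exists
  exact hout hin

lemma exists_boundary_mapClusterPt_diag [CompactSpace Xb] (hi : IsOpenEmbedding i)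
    (hc : IsCoarseCompactification i) {ι : Type*} {l : Filter ι} [l.NeBot] {a b : ι → X}
    {R : ℝ} (hab : ∀ k, dist (a k) (b k) ≤ R) (ha : Tendsto a l (cobounded X)) :
    ∃ p ∉ range i, MapClusterPt (p, p) l (fun k => (i (a k), i (b k))) := by
  obtain ⟨⟨p, q⟩, hpq⟩ : ∃ z, MapClusterPt z l (fun k => (i (a k), i (b k))) :=
    exists_clusterPt_of_compactSpace _
  have hpa : MapClusterPt p l (Prod.fst ∘ fun k => (i (a k), i (b k))) :=
    hpq.tendsto_comp (continuous_fst.tendsto (p, q))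
  have hp : p ∉ range i := notMem_range_of_mapClusterPt_of_tendsto_cobounded hi ha hpa
  have hE : IsEntourage (range fun k => (a k, b k)) := ⟨R, by rintro _ ⟨k, rfl⟩; exact hab k⟩
  have hcl :
      (p, q) ∈ closure ((fun x : X × X => (i x.1, i x.2)) '' range fun k => (a k, b k)) := by
    rw [← range_comp, mem_closure_iff_clusterPt]
    exact hpq.clusterPt.mono (le_principal_iff.2 range_mem_map)
  obtain ⟨rfl, -⟩ : p = q ∧ _ := hc _ hE ⟨hcl, Or.inl ⟨hp, trivial⟩⟩
  exact ⟨p, hp, hpq⟩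

lemma not_close_preimage_compl_of_boundary_subset [CompactSpace Xb] (hi : IsOpenEmbedding i)
    (hc : IsCoarseCompactification i) {U V : Set Xb} (hU : IsOpen U) (hV : IsOpen V)
    (hUV : Disjoint U V) (hsub : (range i)ᶜ ⊆ U ∪ V) : ¬ Close (i ⁻¹' U) (i ⁻¹' U)ᶜ := by
  rintro ⟨R, -, a, b, ha, hb, hab, hunb⟩
  have : (comap a (cobounded X)).NeBot :=
    comap_neBot_iff_compl_range.2 fun h => hunb (isBounded_def.2 h)
  obtain ⟨p, hp, hcl⟩ := exists_boundary_mapClusterPt_diag hi hc hab tendsto_comap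
  rcases hsub hp with hpU | hpV
  · obtain ⟨k, hk⟩ := (hcl.frequently (prod_mem_nhds univ_mem (hU.mem_nhds hpU))).exists
    exact hb k hk.2
  · obtain ⟨k, hk⟩ := (hcl.frequently (prod_mem_nhds (hV.mem_nhds hpV) univ_mem)).exists
    exact disjoint_left.1 hUV (ha k) hk.1

lemma isBounded_preimage_or_isBounded_preimage [CompactSpace Xb]
    (hone : ∀ A : Set X, Close A Aᶜ ∨ IsBounded A ∨ IsBounded Aᶜ) (hi : IsOpenEmbedding i)
    (hc : IsCoarseCompactification i) {U V : Set Xb} (hU : IsOpen U) (hV : IsOpen V)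
    (hUV : Disjoint U V) (hsub : (range i)ᶜ ⊆ U ∪ V) :
    IsBounded (i ⁻¹' U) ∨ IsBounded (i ⁻¹' V) := by
  rcases hone (i ⁻¹' U) with hclose | hbdd | hbdd
  · exact absurd hclose (not_close_preimage_compl_of_boundary_subset hi hc hU hV hUV hsub)
  · exact Or.inl hbdd
  · exact Or.inr (hbdd.subset fun x hxV hxU => disjoint_left.1 hUV hxU hxV)

end CoarseCompactification

/-- if `X` has at most one end then the boundary of every coarse
compactification is preconnected. -/
theorem boundary_preconnected_of_one_ended {X Xb : Type*} [MetricSpace X] [ProperSpace X]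
    [TopologicalSpace Xb] [CompactSpace Xb] [T2Space Xb]
    (hone : ∀ A : Set X, Close A Aᶜ ∨ Bornology.IsBounded A ∨ Bornology.IsBounded Aᶜ)
    (i : X → Xb) (hi : IsOpenEmbedding i) (hd : DenseRange i)
    (hc : IsCoarseCompactification i) :
    IsPreconnected ((Set.range i)ᶜ : Set Xb) := by
  refine (isPreconnected_iff_subset_of_fully_disjoint_closed hi.isOpen_range.isClosed_compl).2 ?_
  intro F G hF hG hcover hFG
  obtain ⟨U, V, hU, hV, hFU, hGV, hUV⟩ := normal_separation hF hG hFG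
  have hsub : (range i)ᶜ ⊆ U ∪ V := hcover.trans (union_subset_union hFU hGV)
  rcases isBounded_preimage_or_isBounded_preimage hone hi hc hU hV hUV hsub with hb | hb
  · have hmiss := disjoint_boundary_of_isBounded_preimage hi.continuous hd hU hb
    exact Or.inr fun p hp => (hcover hp).resolve_left fun hpF => disjoint_left.1 hmiss hp (hFU hpF)
  · have hmiss := disjoint_boundary_of_isBounded_preimage hi.continuous hd hV hb
    exact Or.inl fun p hp => (hcover hp).resolve_right fun hpG => disjoint_left.1 hmiss hp (hGV hpG)
end

section
/- Let X be a proper metric space and let A, B ⊆ X be nonempty subsets with d(A,B) = inf{d(a,b) : a ∈ A, b ∈ B} > 0 and ¬(A ≍ B). Then the function φ_{A,B} : X → ℝ defined by φ_{A,B}(x) = d(x,A) / (d(x,A) + d(x,B)) is a Higson function. -/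
open Topology

/-!
Write `φ = f / (f + g)` with `f = d(·, A)` and `g = d(·, B)`, both 1-Lipschitz. On a pair of
points at distance at most `C` the variation of `φ` is at most `C / (f + g)`, so it suffices that
`f + g` tends to infinity. Indeed a set on which `f + g ≤ M` that is unbounded would supply an
unbounded sequence of points of `A` within distance about `2M` of points of `B`, i.e. `A ≍ B`.
Positivity of `d(A, B)` keeps `f + g` away from `0`, which makes `φ` continuous.
-/

open Metric Bornology

lemma abs_div_add_sub_div_add_le {a b c d C : ℝ} (hc : 0 ≤ c) (hd : 0 ≤ d)
    (hab : 0 < a + b) (hcd : 0 < c + d) (hac : |a - c| ≤ C) (hbd : |b - d| ≤ C) :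
    |a / (a + b) - c / (c + d)| ≤ C / (a + b) := by
  have hnum : |a * (c + d) - (a + b) * c| ≤ C * (c + d) :=
    calc |a * (c + d) - (a + b) * c| = |d * (a - c) - c * (b - d)| := by congr 1; ring
      _ ≤ |d * (a - c)| + |c * (b - d)| := abs_sub _ _
      _ = d * |a - c| + c * |b - d| := by rw [abs_mul, abs_mul, abs_of_nonneg hc, abs_of_nonneg hd]
      _ ≤ d * C + c * C := by gcongr
      _ = C * (c + d) := by ring
  rw [div_sub_div _ _ hab.ne' hcd.ne', abs_div, abs_of_pos (mul_pos hab hcd),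
    div_le_div_iff₀ (mul_pos hab hcd) hab]
  calc |a * (c + d) - (a + b) * c| * (a + b) ≤ C * (c + d) * (a + b) := by gcongr
    _ = C * ((a + b) * (c + d)) := by ring

lemma abs_div_add_le_one {a b : ℝ} (ha : 0 ≤ a) (hb : 0 ≤ b) : |a / (a + b)| ≤ 1 := by
  rw [abs_of_nonneg (by positivity)]
  exact div_le_one_of_le₀ (by linarith) (by positivity)

section Higson

variable {X : Type*} [MetricSpace X]

lemma exists_seq_mem_not_isBounded_range {S : Set X} (hS : ¬IsBounded S) :
    ∃ x : ℕ → X, (∀ n, x n ∈ S) ∧ ¬IsBounded (Set.range x) := by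
  obtain ⟨x₀, -⟩ := nonempty_of_not_isBounded hS
  have hfar : ∀ n : ℕ, ∃ x ∈ S, (n : ℝ) < dist x x₀ := fun n => by
    by_contra! h
    exact hS (isBounded_closedBall.subset fun x hx => mem_closedBall.2 (h x hx))
  choose x hxS hx using hfar
  refine ⟨x, hxS, fun h => ?_⟩
  obtain ⟨r, hr⟩ := h.subset_closedBall x₀
  linarith [mem_closedBall.1 (hr (Set.mem_range_self ⌈r⌉₊)), Nat.le_ceil r, hx ⌈r⌉₊]

lemma close_of_not_isBounded {A B S : Set X} {r : ℝ} (hS : ¬IsBounded S)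
    (hA : ∀ x ∈ S, ∃ a ∈ A, dist x a ≤ r) (hB : ∀ x ∈ S, ∃ b ∈ B, dist x b ≤ r) :
    Close A B := by
  obtain ⟨x, hxS, hx⟩ := exists_seq_mem_not_isBounded_range hS
  choose a haA hxa using fun n => hA (x n) (hxS n)
  choose b hbB hxb using fun n => hB (x n) (hxS n)
  refine ⟨r + r, by linarith [dist_nonneg.trans (hxa 0)], a, b, haA, hbB,
    fun n => (dist_triangle_left _ _ (x n)).trans (add_le_add (hxa n) (hxb n)), fun ha => ?_⟩
  refine hx ((ha.cthickening (δ := r)).subset ?_)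
  rintro _ ⟨n, rfl⟩
  exact mem_cthickening_of_dist_le _ _ _ _ (Set.mem_range_self n) (hxa n)

lemma isBounded_setOf_infDist_add_infDist_le {A B : Set X} (hA : A.Nonempty) (hB : B.Nonempty)
    (hAB : ¬Close A B) (M : ℝ) : IsBounded {x | infDist x A + infDist x B ≤ M} := by
  by_contra hS
  refine hAB (close_of_not_isBounded (r := M + 1) hS ?_ ?_) <;> intro x hx
  · obtain ⟨a, ha, hxa⟩ := (infDist_lt_iff hA).1
      (show infDist x A < M + 1 by linarith [hx.out, infDist_nonneg (x := x) (s := B)])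
    exact ⟨a, ha, hxa.le⟩
  · obtain ⟨b, hb, hxb⟩ := (infDist_lt_iff hB).1
      (show infDist x B < M + 1 by linarith [hx.out, infDist_nonneg (x := x) (s := A)])
    exact ⟨b, hb, hxb.le⟩

lemma le_infDist_add_infDist {A B : Set X} (hA : A.Nonempty) (hB : B.Nonempty) {ε : ℝ}
    (hAB : ∀ a ∈ A, ∀ b ∈ B, ε ≤ dist a b) (x : X) : ε ≤ infDist x A + infDist x B := by
  have : ε - infDist x B ≤ infDist x A := (le_infDist hA).2 fun a ha => by
    have : ε - dist x a ≤ infDist x B := (le_infDist hB).2 fun b hb => by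
      linarith [hAB a ha b hb, dist_triangle_left a b x]
    linarith
  linarith

lemma isHigson_div_add {f g : X → ℝ} (hf : LipschitzWith 1 f) (hg : LipschitzWith 1 g)
    (hf₀ : ∀ x, 0 ≤ f x) (hg₀ : ∀ x, 0 ≤ g x) (hpos : ∀ x, 0 < f x + g x)
    (hbdd : ∀ M, IsBounded {x | f x + g x ≤ M}) :
    IsHigson fun x => f x / (f x + g x) := by
  have hvar (x y : X) : |f x / (f x + g x) - f y / (f y + g y)| ≤ dist x y / (f x + g x) := by
    refine abs_div_add_sub_div_add_le (hf₀ y) (hg₀ y) (hpos x) (hpos y) ?_ ?_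
    · simpa [Real.dist_eq] using hf.dist_le_mul x y
    · simpa [Real.dist_eq] using hg.dist_le_mul x y
  refine ⟨hf.continuous.div (hf.continuous.add hg.continuous) fun x => (hpos x).ne',
    ⟨1, fun x => abs_div_add_le_one (hf₀ x) (hg₀ x)⟩, ?_⟩
  rintro E ⟨C, hC⟩ ε hε
  set C' := max C 0
  have hsmall (x y : X) (hxy : dist x y ≤ C') (hx : C' / ε < f x + g x) :
      |f x / (f x + g x) - f y / (f y + g y)| < ε :=
    calc _ ≤ dist x y / (f x + g x) := hvar x y
      _ ≤ C' / (f x + g x) := by gcongr; exact (hpos x).le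
      _ < ε := (div_lt_iff₀ (hpos x)).2 ((div_lt_iff₀' hε).1 hx)
  refine ⟨{x | f x + g x ≤ C' / ε}, hbdd _, ?_⟩
  rintro ⟨x, y⟩ hxy (hx | hy)
  · exact hsmall x y ((hC _ hxy).trans (le_max_left _ _)) (not_le.1 hx)
  · rw [abs_sub_comm]
    exact hsmall y x (dist_comm x y ▸ (hC _ hxy).trans (le_max_left _ _)) (not_le.1 hy)

end Higson

theorem phiAB_isHigson_general {X : Type*} [MetricSpace X]
    (A B : Set X) (hA : A.Nonempty) (hB : B.Nonempty)
    (hdist : ∃ ε > (0:ℝ), ∀ a ∈ A, ∀ b ∈ B, ε ≤ dist a b)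
    (hnc : ¬ Close A B) :
    IsHigson (fun x : X => Metric.infDist x A / (Metric.infDist x A + Metric.infDist x B)) := by
  obtain ⟨ε, hε, hAB⟩ := hdist
  exact isHigson_div_add (lipschitz_infDist_pt A) (lipschitz_infDist_pt B) (fun _ => infDist_nonneg)
    (fun _ => infDist_nonneg) (fun x => hε.trans_le (le_infDist_add_infDist hA hB hAB x))
    (isBounded_setOf_infDist_add_infDist_le hA hB hnc)

/-- `φ_{A,B}(x) = d(x,A)/(d(x,A)+d(x,B))` is a Higson function when
`A, B` are nonempty, at positive distance, and not close. -/
theorem phiAB_isHigson {X : Type*} [MetricSpace X] [ProperSpace X]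
    (A B : Set X) (hA : A.Nonempty) (hB : B.Nonempty)
    (hdist : ∃ ε > (0:ℝ), ∀ a ∈ A, ∀ b ∈ B, ε ≤ dist a b)
    (hnc : ¬ Close A B) :
    IsHigson (fun x : X => Metric.infDist x A / (Metric.infDist x A + Metric.infDist x B)) :=
  phiAB_isHigson_general A B hA hB hdist hnc
end

section
/- Let X be a metric space and let U₁, …, Uₙ ⊆ X coarsely cover X. Let φ : X → ℝ be a bounded continuous function such that for each i the restriction φ|_{Uᵢ} is a Higson function on the metric subspace Uᵢ (i.e. for every R ≥ 0 and ε > 0 there is a bounded set B ⊆ X such that for all x, y ∈ Uᵢ with d(x,y) ≤ R and x ∉ B, |φ(x) − φ(y)| < ε). Then φ is a Higson function on X. -/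
open Topology

/-! Fix a scale `R`. A point outside the bounded set `⋂ᵢ E_R[Uᵢᶜ]`, where `E_R` is the
`R`-neighbourhood of the diagonal, has its whole closed `R`-ball inside some `Uᵢ`; so a pair at
distance `≤ R` starting there lies in a single `Uᵢ`, where `φ` varies by less than `ε` away from a
bounded set `Bᵢ`. The finitely many `Bᵢ` together with that intersection form the bounded set
required of a Higson function. -/

section CoarseCover

variable {X ι : Type*} [MetricSpace X]

def CoarselyCovers (U : ι → Set X) : Prop :=
  ∀ E : Set (X × X), IsEntourage E → Bornology.IsBounded (⋂ i, EImage E (U i)ᶜ)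

/-- The Higson condition on the metric subspace `U`, without continuity and boundedness. -/
def HasVanishingVariationOn (φ : X → ℝ) (U : Set X) : Prop :=
  ∀ R ≥ (0:ℝ), ∀ ε > (0:ℝ), ∃ B : Set X, Bornology.IsBounded B ∧
    ∀ x ∈ U, ∀ y ∈ U, dist x y ≤ R → x ∉ B → |φ x - φ y| < ε

theorem notMem_eImage_compl_iff_closedBall_subset {S : Set X} {x : X} {R : ℝ} :
    x ∉ EImage {p : X × X | dist p.1 p.2 ≤ R} Sᶜ ↔ Metric.closedBall x R ⊆ S := by
  simp only [EImage, Set.mem_ofPred_eq, Set.mem_compl_iff, not_exists, not_and, not_imp_not,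
    Set.subset_def, Metric.mem_closedBall, dist_comm x]

theorem isHigson_of_hasVanishingVariationOn_univ {φ : X → ℝ} (hc : Continuous φ)
    (hb : ∃ C : ℝ, ∀ x, |φ x| ≤ C) (hφ : HasVanishingVariationOn φ Set.univ) :
    IsHigson φ := by
  refine ⟨hc, hb, fun E ⟨C, hC⟩ ε hε => ?_⟩
  obtain ⟨B, hBb, hB⟩ := hφ (max C 0) (le_max_right C 0) ε hε
  refine ⟨B, hBb, fun p hp hout => ?_⟩
  have hdist : dist p.1 p.2 ≤ max C 0 := (hC p hp).trans (le_max_left C 0)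
  rcases hout with h₁ | h₂
  · exact hB _ trivial _ trivial hdist h₁
  · rw [abs_sub_comm]
    exact hB _ trivial _ trivial (dist_comm p.1 p.2 ▸ hdist) h₂

theorem CoarselyCovers.hasVanishingVariationOn_univ [Finite ι] {U : ι → Set X} {φ : X → ℝ}
    (hU : CoarselyCovers U) (hφ : ∀ i, HasVanishingVariationOn φ (U i)) :
    HasVanishingVariationOn φ Set.univ := by
  intro R hR ε hε
  choose B hBb hB using fun i => hφ i R hR ε hε
  set E : Set (X × X) := {p | dist p.1 p.2 ≤ R}
  refine ⟨(⋂ i, EImage E (U i)ᶜ) ∪ ⋃ i, B i,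
    (hU E ⟨R, fun _ hp => hp⟩).union (Bornology.isBounded_iUnion.mpr hBb), ?_⟩
  intro x _ y _ hxy hx
  simp only [Set.mem_union, Set.mem_iInter, Set.mem_iUnion, not_or, not_forall, not_exists] at hx
  obtain ⟨⟨i, hi⟩, hxB⟩ := hx
  rw [notMem_eImage_compl_iff_closedBall_subset] at hi
  exact hB i x (hi (Metric.mem_closedBall_self hR)) y
    (hi (Metric.mem_closedBall'.mpr hxy)) hxy (hxB i)

end CoarseCover

/-- if `U₁, …, Uₙ` coarsely cover `X` and a bounded continuous `φ` is
Higson on each `Uᵢ`, then `φ` is Higson on `X`. -/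
theorem higson_of_coarse_cover {X : Type*} [MetricSpace X]
    (n : ℕ) (U : Fin n → Set X)
    (hcover : ∀ E : Set (X × X), IsEntourage E →
      Bornology.IsBounded (⋂ i : Fin n, EImage E (U i)ᶜ))
    (φ : X → ℝ) (hφc : Continuous φ) (hφb : ∃ C : ℝ, ∀ x, |φ x| ≤ C)
    (hloc : ∀ i : Fin n, ∀ R ≥ (0:ℝ), ∀ ε > (0:ℝ), ∃ B : Set X,
      Bornology.IsBounded B ∧
      ∀ x ∈ U i, ∀ y ∈ U i, dist x y ≤ R → x ∉ B → |φ x - φ y| < ε) :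
    IsHigson φ :=
  isHigson_of_hasVanishingVariationOn_univ hφc hφb
    (CoarselyCovers.hasVanishingVariationOn_univ hcover hloc)
end

section
/- Let X be a metric space, r a large-scale proximity relation on X, and A ⊆ X a subset regarded as a metric subspace. Define the restricted relation r|_A on subsets of A by: S r|_A T iff S r T (as subsets of X). Then r|_A is a large-scale proximity relation on the metric space A. -/
open Topology

namespace IsLSP

variable {X : Type*} [MetricSpace X] {r : Set X → Set X → Prop}

lemma of_subset_left (hr : IsLSP r) {A A' B : Set X} (h : A ⊆ A') (hAB : r A B) : r A' B := by
  simpa [Set.union_eq_self_of_subset_left h] using (hr.union_iff A A' B).2 (Or.inl hAB)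

end IsLSP

lemma IsEntourage.image_prodMap {X Y : Type*} [MetricSpace X] [MetricSpace Y] {f : X → Y}
    {K : NNReal} (hf : LipschitzWith K f) {E : Set (X × X)} (hE : IsEntourage E) :
    IsEntourage (Prod.map f f '' E) := by
  obtain ⟨C, hC⟩ := hE
  refine ⟨K * C, ?_⟩
  rintro _ ⟨p, hp, rfl⟩
  calc dist (f p.1) (f p.2) ≤ K * dist p.1 p.2 := hf.dist_le_mul _ _
    _ ≤ K * C := by gcongr; exact hC p hp

lemma image_eImage_subset {X Y : Type*} (f : X → Y) (E : Set (X × X)) (S : Set X) :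
    f '' EImage E S ⊆ EImage (Prod.map f f '' E) (f '' S) := by
  rintro _ ⟨x, ⟨y, hy, hxy⟩, rfl⟩
  exact ⟨f y, Set.mem_image_of_mem f hy, (x, y), hxy, rfl⟩

/-- the restriction of a large-scale proximity relation to a metric
subspace is a large-scale proximity relation. -/
theorem lsp_restrict {X : Type*} [MetricSpace X]
    (r : Set X → Set X → Prop) (hr : IsLSP r) (A : Set X) :
    IsLSP (fun S T : Set A => r (Subtype.val '' S) (Subtype.val '' T)) := by
  constructor
  case not_self_iff_bounded =>
    intro B
    rw [hr.not_self_iff_bounded, Bornology.isBounded_image_subtype_val]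
  case symm => exact fun S T ↦ hr.symm _ _
  case entourage_invariant =>
    intro S S' E hE hS' hS T
    exact hr.entourage_invariant _ _ _ (hE.image_prodMap (LipschitzWith.subtype_val A))
      ((Set.image_mono hS').trans (image_eImage_subset _ _ _))
      ((Set.image_mono hS).trans (image_eImage_subset _ _ _)) _
  case union_iff =>
    intro S T U
    rw [Set.image_union]
    exact hr.union_iff _ _ _
  case separation =>
    intro S T h
    obtain ⟨C, D, hCD, hCS, hDT⟩ := hr.separation _ _ h
    refine ⟨Subtype.val ⁻¹' C, Subtype.val ⁻¹' D, ?_, ?_, ?_⟩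
    · rw [← Set.preimage_union, hCD, Set.preimage_univ]
    · exact fun hC ↦ hCS (hr.of_subset_left (Set.image_preimage_subset _ _) hC)
    · exact fun hD ↦ hDT (hr.of_subset_left (Set.image_preimage_subset _ _) hD)
end

section
/- Let X be a proper metric space, i : X → X̄ a coarse compactification with boundary ∂X = X̄ ∖ i(X), and let π ⊆ ∂X be a subset that is both open and closed in the subspace ∂X. Then there exist subsets C, D ⊆ X with C ∪ D = X, ¬(C ≍ D), π contained in the closure of i(C) in X̄, and ∂X ∖ π contained in the closure of i(D) in X̄. -/
open Topology

/-!
Separate the disjoint closed sets `π` and `∂X ∖ π` by disjoint open sets `U ⊇ π` and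
`V ⊇ ∂X ∖ π` of `X̄`, and take `C = i⁻¹(U)`, `D = X ∖ C`. If `C ≍ D`, pass to an ultrafilter
along which the witnessing sequences `aₙ ∈ C` escape to infinity; the limits `p`, `q` of
`i(aₙ)`, `i(bₙ)` satisfy `p ∈ ∂X` and, by coarseness, `p = q`. But `p ∈ closure U` lies outside `V`
and `q ∈ closure (X̄ ∖ U)` outside `U`, while `∂X ⊆ U ∪ V`.
-/

open Set Filter Topology Bornology

theorem exists_ultrafilter_tendsto_cobounded {ι α : Type*} [Bornology α] {a : ι → α}
    (h : ¬ IsBounded (range a)) : ∃ F : Ultrafilter ι, Tendsto a F (cobounded α) := by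
  have : (comap a (cobounded α)).NeBot := comap_neBot_iff.2 fun t ht => by
    by_contra! hat
    exact h ((isBounded_compl_iff.2 ht).subset (range_subset_iff.2 hat))
  exact ⟨Ultrafilter.of _, tendsto_comap.mono_left (Ultrafilter.of_le _)⟩

theorem Topology.IsInducing.notMem_range_of_tendsto_cobounded {ι X Y : Type*} [MetricSpace X]
    [TopologicalSpace Y] {i : X → Y} (hi : IsInducing i) {l : Filter ι} [l.NeBot] {a : ι → X}
    {p : Y} (ha : Tendsto a l (cobounded X)) (hp : Tendsto (i ∘ a) l (𝓝 p)) :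
    p ∉ range i := by
  rintro ⟨x, rfl⟩
  exact ha.not_tendsto (Metric.disjoint_nhds_cobounded x).symm (hi.tendsto_nhds_iff.2 hp)

theorem IsCoarseCompactification.eq_of_tendsto {ι X Y : Type*} [MetricSpace X]
    [TopologicalSpace Y] {i : X → Y} (hc : IsCoarseCompactification i) {l : Filter ι} [l.NeBot]
    {a b : ι → X} {R : ℝ} (hab : ∀ n, dist (a n) (b n) ≤ R) {p q : Y}
    (hpq : Tendsto (fun n => (i (a n), i (b n))) l (𝓝 (p, q))) (hp : p ∉ range i) : p = q := by
  have hE : IsEntourage (range fun n => (a n, b n)) := ⟨R, by simpa using hab⟩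
  refine (hc _ hE ⟨mem_closure_of_tendsto hpq (Eventually.of_forall fun n => ?_),
    Or.inl ⟨hp, trivial⟩⟩).1
  exact ⟨(a n, b n), mem_range_self n, rfl⟩

theorem Close.exists_notMem_range_mem_closure_image {X Y : Type*} [MetricSpace X]
    [TopologicalSpace Y] [CompactSpace Y] {i : X → Y} (hi : IsInducing i)
    (hc : IsCoarseCompactification i) {A B : Set X} (h : Close A B) :
    ∃ p ∉ range i, p ∈ closure (i '' A) ∧ p ∈ closure (i '' B) := by
  obtain ⟨R, -, a, b, ha, hb, hab, hunb⟩ := h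
  obtain ⟨F, hF⟩ := exists_ultrafilter_tendsto_cobounded hunb
  obtain ⟨⟨p, q⟩, -, hpq⟩ := isCompact_univ.ultrafilter_le_nhds
    (F.map fun n => (i (a n), i (b n))) (le_principal_iff.2 univ_mem)
  have hpq : Tendsto (fun n => (i (a n), i (b n))) F (𝓝 (p, q)) := hpq
  have hp : p ∉ range i := hi.notMem_range_of_tendsto_cobounded hF hpq.fst_nhds
  refine ⟨p, hp, ?_, ?_⟩
  · exact mem_closure_of_tendsto hpq.fst_nhds
      (Eventually.of_forall fun n => mem_image_of_mem i (ha n))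
  · rw [hc.eq_of_tendsto hab hpq hp]
    exact mem_closure_of_tendsto hpq.snd_nhds
      (Eventually.of_forall fun n => mem_image_of_mem i (hb n))

theorem clopen_boundary_separation_general {X Xb : Type*} [MetricSpace X]
    [TopologicalSpace Xb] [CompactSpace Xb] [T2Space Xb]
    (i : X → Xb) (hi : IsOpenEmbedding i) (hd : DenseRange i)
    (hc : IsCoarseCompactification i)
    (π : Set Xb) (hπ : π ⊆ (Set.range i)ᶜ)
    (hopen : IsOpen (Subtype.val ⁻¹' π : Set ((Set.range i)ᶜ : Set Xb)))
    (hclosed : IsClosed (Subtype.val ⁻¹' π : Set ((Set.range i)ᶜ : Set Xb))) :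
    ∃ C D : Set X, C ∪ D = Set.univ ∧ ¬ Close C D ∧
      π ⊆ closure (i '' C) ∧ ((Set.range i)ᶜ \ π) ⊆ closure (i '' D) := by
  have hbdry : IsClosed (range i)ᶜ := hi.isOpen_range.isClosed_compl
  have hπ_closed : IsClosed π := by
    simpa [Subtype.image_preimage_coe, inter_eq_right.2 hπ] using hclosed.trans hbdry
  have hπc_closed : IsClosed ((range i)ᶜ \ π) := by
    simpa [image_val_compl, Subtype.image_preimage_coe] using hopen.isClosed_compl.trans hbdry
  obtain ⟨U, V, hU, hV, hπU, hπV, hUV⟩ :=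
    normal_separation hπ_closed hπc_closed disjoint_sdiff_right
  have hVD : i ⁻¹' V ⊆ (i ⁻¹' U)ᶜ := fun x hxV hxU => hUV.le_bot ⟨hxU, hxV⟩
  refine ⟨i ⁻¹' U, (i ⁻¹' U)ᶜ, union_compl_self _, fun hclose => ?_,
    hπU.trans (hd.subset_closure_image_preimage_of_isOpen hU),
    hπV.trans ((hd.subset_closure_image_preimage_of_isOpen hV).trans
      (closure_mono (image_mono hVD)))⟩
  obtain ⟨p, hp, hpC, hpD⟩ := hclose.exists_notMem_range_mem_closure_image hi.isInducing hc
  have hpV : p ∉ V :=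
    (hUV.closure_left hV).notMem_of_mem_left (closure_mono (image_preimage_subset i U) hpC)
  have hpU : p ∉ U := closure_minimal (image_subset_iff.2 subset_rfl) hU.isClosed_compl hpD
  by_cases h : p ∈ π
  exacts [hpU (hπU h), hpV (hπV ⟨hp, h⟩)]

/-- a clopen subset of the boundary of a coarse compactification is
separated from its complement by a non-close decomposition of `X`. -/
theorem clopen_boundary_separation {X Xb : Type*} [MetricSpace X] [ProperSpace X]
    [TopologicalSpace Xb] [CompactSpace Xb] [T2Space Xb]
    (i : X → Xb) (hi : IsOpenEmbedding i) (hd : DenseRange i)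
    (hc : IsCoarseCompactification i)
    (π : Set Xb) (hπ : π ⊆ (Set.range i)ᶜ)
    (hopen : IsOpen (Subtype.val ⁻¹' π : Set ((Set.range i)ᶜ : Set Xb)))
    (hclosed : IsClosed (Subtype.val ⁻¹' π : Set ((Set.range i)ᶜ : Set Xb))) :
    ∃ C D : Set X, C ∪ D = Set.univ ∧ ¬ Close C D ∧
      π ⊆ closure (i '' C) ∧ ((Set.range i)ᶜ \ π) ⊆ closure (i '' D) :=
  clopen_boundary_separation_general i hi hd hc π hπ hopen hclosed
end

section
/- Let α : X → Y be a coarse map between metric spaces. Then for all subsets A, B ⊆ X, A ≍_f B implies α(A) ≍_f α(B). -/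
open Topology

/-! If `α(A) ⊆ A'`, `α(B) ⊆ B'` is a cover of `Y` by non-close sets, its preimage is such a cover of
`X` containing `A` and `B`: closeness of the preimages transports forward along `α`, since
coarse uniformity keeps paired sequences at bounded distance and coarse properness keeps
unbounded sequences unbounded. -/

open Bornology Set

section

variable {X Y : Type*} [MetricSpace X] [MetricSpace Y]

-- `IsCoarseMap f` unfolds to `IsCoarselyUniform f ∧ IsCoarselyProper f`.
def IsCoarselyUniform (f : X → Y) : Prop :=
  ∀ E : Set (X × X), IsEntourage E → IsEntourage ((fun p : X × X => (f p.1, f p.2)) '' E)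

def IsCoarselyProper (f : X → Y) : Prop :=
  ∀ S : Set Y, IsBounded S → IsBounded (f ⁻¹' S)

theorem IsCoarselyUniform.exists_dist_comp_le {f : X → Y} (hf : IsCoarselyUniform f)
    {ι : Type*} {a b : ι → X} {R : ℝ} (hR : ∀ i, dist (a i) (b i) ≤ R) :
    ∃ C, ∀ i, dist (f (a i)) (f (b i)) ≤ C := by
  obtain ⟨C, hC⟩ := hf (range fun i => (a i, b i)) ⟨R, by rintro _ ⟨i, rfl⟩; exact hR i⟩
  exact ⟨C, fun i => hC _ ⟨_, ⟨i, rfl⟩, rfl⟩⟩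

theorem IsCoarselyProper.not_isBounded_range_comp {f : X → Y} (hf : IsCoarselyProper f)
    {ι : Type*} {a : ι → X} (ha : ¬ IsBounded (range a)) : ¬ IsBounded (range (f ∘ a)) :=
  fun hfa => ha <| (hf _ hfa).subset <| by rintro _ ⟨i, rfl⟩; exact ⟨i, rfl⟩

theorem Close.mono {A B A' B' : Set X} (h : Close A B) (hA : A ⊆ A') (hB : B ⊆ B') :
    Close A' B' := by
  obtain ⟨R, hR, a, b, ha, hb, hab, hunb⟩ := h
  exact ⟨R, hR, a, b, fun n => hA (ha n), fun n => hB (hb n), hab, hunb⟩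

theorem Close.image {f : X → Y} (hf : IsCoarseMap f) {A B : Set X} (h : Close A B) :
    Close (f '' A) (f '' B) := by
  obtain ⟨R, -, a, b, ha, hb, hR, hunb⟩ := h
  obtain ⟨C, hC⟩ := IsCoarselyUniform.exists_dist_comp_le hf.1 hR
  exact ⟨max C 0, le_max_right _ _, f ∘ a, f ∘ b, fun n => mem_image_of_mem f (ha n),
    fun n => mem_image_of_mem f (hb n), fun n => (hC n).trans (le_max_left _ _),
    IsCoarselyProper.not_isBounded_range_comp hf.2 hunb⟩

end

/-- coarse maps preserve the relation `≍_f`. -/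
theorem coarseMap_preserves_closeF {X Y : Type*} [MetricSpace X] [MetricSpace Y]
    (α : X → Y) (hα : IsCoarseMap α) :
    ∀ A B : Set X, CloseF A B → CloseF (α '' A) (α '' B) := by
  rintro A B hAB ⟨A', B', hA', hB', hcover, hnc⟩
  refine hAB ⟨α ⁻¹' A', α ⁻¹' B', image_subset_iff.mp hA', image_subset_iff.mp hB', ?_,
    fun h => hnc ?_⟩
  · rw [← preimage_union, hcover, preimage_univ]
  · exact (h.image hα).mono (image_preimage_subset α A') (image_preimage_subset α B')
end

section
/- Let X be a metric space with basepoint x₀ and let φ : X → ℝ be a bounded continuous Freudenthal function. Let F and G be ultrafilters on X such that A ≍_f B holds for every A ∈ F and B ∈ G. If φ tends to a ∈ ℝ along F and to b ∈ ℝ along G, then a = b. -/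
open Topology

/-!
If `φ` tended to `a ≠ b` along `F` and `G`, pick disjoint neighbourhoods `S ∋ a`, `T ∋ b`.
Far from `x₀`, points at bounded distance have the same `φ`-value, so no preimage `φ⁻¹ T` is
close to its complement. The cover `X = (φ⁻¹ T)ᶜ ∪ φ⁻¹ T`, with `φ⁻¹ S ⊆ (φ⁻¹ T)ᶜ`, then
witnesses `¬ (φ⁻¹ S ≍_f φ⁻¹ T)` although `φ⁻¹ S ∈ F` and `φ⁻¹ T ∈ G`.
-/

lemma Close.exists_far_pairs {X : Type*} [MetricSpace X] {A B : Set X} (hAB : Close A B)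
    (x₀ : X) : ∃ R ≥ (0 : ℝ), ∀ K : ℝ, ∃ x ∈ A, ∃ y ∈ B,
      dist x y ≤ R ∧ K ≤ dist x₀ x ∧ K ≤ dist x₀ y := by
  obtain ⟨R, hR, u, v, hu, hv, huv, hunb⟩ := hAB
  refine ⟨R, hR, fun K => ?_⟩
  obtain ⟨n, hn⟩ : ∃ n, K + R < dist x₀ (u n) := by
    by_contra! h
    refine hunb ((Metric.isBounded_iff_subset_closedBall x₀).2 ⟨K + R, ?_⟩)
    rintro _ ⟨n, rfl⟩
    simpa [dist_comm] using h n
  refine ⟨u n, hu n, v n, hv n, huv n, by linarith, ?_⟩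
  linarith [dist_triangle x₀ (v n) (u n), dist_comm (u n) (v n), huv n]

/-- The large-scale half of "Freudenthal function", without boundedness and continuity. -/
def FreudenthalCondition {X Y : Type*} [MetricSpace X] (x₀ : X) (φ : X → Y) : Prop :=
  ∀ R ≥ (0:ℝ), ∃ K ≥ (0:ℝ), ∀ x y : X,
    dist x y ≤ R → K ≤ dist x₀ x → K ≤ dist x₀ y → φ x = φ y

lemma not_close_compl_preimage_preimage {X Y : Type*} [MetricSpace X] {x₀ : X} {φ : X → Y}
    (hφf : FreudenthalCondition x₀ φ) (S : Set Y) : ¬ Close (φ ⁻¹' S)ᶜ (φ ⁻¹' S) := by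
  intro hclose
  obtain ⟨R, hR, hfar⟩ := hclose.exists_far_pairs x₀
  obtain ⟨K, -, hconst⟩ := hφf R hR
  obtain ⟨x, hx, y, hy, hxy, hKx, hKy⟩ := hfar K
  exact hx (show φ x ∈ S by rw [hconst x y hxy hKx hKy]; exact hy)

lemma not_closeF_preimage_of_disjoint {X Y : Type*} [MetricSpace X] {x₀ : X} {φ : X → Y}
    (hφf : FreudenthalCondition x₀ φ) {S T : Set Y} (hST : Disjoint S T) :
    ¬ CloseF (φ ⁻¹' S) (φ ⁻¹' T) := by
  refine not_not.2 ⟨(φ ⁻¹' T)ᶜ, φ ⁻¹' T, ?_, subset_rfl, Set.compl_union_self _,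
    not_close_compl_preimage_preimage hφf T⟩
  exact Set.subset_compl_iff_disjoint_right.2 (hST.preimage φ)

theorem freudenthal_limits_eq_general {X : Type*} [MetricSpace X] (x₀ : X)
    (φ : X → ℝ)
    (hφf : ∀ R ≥ (0:ℝ), ∃ K ≥ (0:ℝ), ∀ x y : X,
      dist x y ≤ R → K ≤ dist x₀ x → K ≤ dist x₀ y → φ x = φ y)
    (F G : Ultrafilter X) (hFG : ∀ A ∈ F, ∀ B ∈ G, CloseF A B)
    (a b : ℝ) (ha : Filter.Tendsto φ F (nhds a)) (hb : Filter.Tendsto φ G (nhds b)) :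
    a = b := by
  by_contra hab
  obtain ⟨S, hS, T, hT, hST⟩ := Filter.disjoint_iff.1 (disjoint_nhds_nhds.2 hab)
  exact not_closeF_preimage_of_disjoint hφf hST (hFG _ (ha hS) _ (hb hT))

/-- a Freudenthal function has equal limits along ultrafilters that are
`≍_f`-related. -/
theorem freudenthal_limits_eq {X : Type*} [MetricSpace X] (x₀ : X)
    (φ : X → ℝ) (hφc : Continuous φ) (hφb : ∃ C : ℝ, ∀ x, |φ x| ≤ C)
    (hφf : ∀ R ≥ (0:ℝ), ∃ K ≥ (0:ℝ), ∀ x y : X,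
      dist x y ≤ R → K ≤ dist x₀ x → K ≤ dist x₀ y → φ x = φ y)
    (F G : Ultrafilter X) (hFG : ∀ A ∈ F, ∀ B ∈ G, CloseF A B)
    (a b : ℝ) (ha : Filter.Tendsto φ F (nhds a)) (hb : Filter.Tendsto φ G (nhds b)) :
    a = b :=
  freudenthal_limits_eq_general x₀ φ hφf F G hFG a b ha hb
end

section
/- Let X be a proper geodesic metric space that is δ-hyperbolic for some δ ≥ 0, with basepoint x₀ ∈ X, and let A, B ⊆ X be subsets with A ≍ B. Then A ≍_g B: there exist sequences (aᵢ) in A and (bⱼ) in B such that for every M ≥ 0 there is N with (aᵢ | bⱼ)_{x₀} ≥ M for all i, j ≥ N. -/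
open Topology

/-!
Take the witnesses `aₙ, bₙ` of `A ≍ B` along a subsequence with `d(x₀, aₙ) → ∞`. Properness
lets us extract a further subsequence whose geodesics `[x₀, aₙ]` converge on every ball
`B(x₀, k)` (a diagonal argument). The points at distance `k` from `x₀` on them then lie
within `1` of a common point `q_k`, so eventually `(aₙ | q_k) ≥ k - 1`, and hyperbolicity
makes `(aᵢ | aⱼ) → ∞`. Since `d(aⱼ, bⱼ) ≤ R`, also `(aⱼ | bⱼ) → ∞`, and hyperbolicity once
more gives `(aᵢ | bⱼ) → ∞`.
-/

open Filter Metric Topology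

def IsGromovHyperbolic (X : Type*) [MetricSpace X] (δ : ℝ) : Prop :=
  ∀ w x y z : X, gromovProd w x y ≥ min (gromovProd w x z) (gromovProd w z y) - δ

section

variable {X : Type*} [MetricSpace X]

theorem gromovProd_comm (w x y : X) : gromovProd w x y = gromovProd w y x := by
  unfold gromovProd
  rw [dist_comm x y]
  ring

theorem gromovProd_le_add_dist (w x y z : X) :
    gromovProd w x y ≤ gromovProd w x z + dist y z := by
  unfold gromovProd
  linarith [dist_triangle y z w, dist_triangle x y z]

theorem IsGromovHyperbolic.le_gromovProd {δ c : ℝ} (hX : IsGromovHyperbolic X δ)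
    {w x y z : X} (hxz : c ≤ gromovProd w x z) (hzy : c ≤ gromovProd w z y) :
    c - δ ≤ gromovProd w x y := by
  linarith [hX w x y z, le_min hxz hzy]

theorem IsGromovHyperbolic.tendsto_gromovProd_atTop {δ : ℝ} (hX : IsGromovHyperbolic X δ)
    {α : Type*} {l : Filter α} {w : X} {x y z : α → X}
    (hxz : Tendsto (fun p => gromovProd w (x p) (z p)) l atTop)
    (hzy : Tendsto (fun p => gromovProd w (z p) (y p)) l atTop) :
    Tendsto (fun p => gromovProd w (x p) (y p)) l atTop :=
  tendsto_atTop.2 fun M =>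
    ((tendsto_atTop.1 hxz (M + δ)).and (tendsto_atTop.1 hzy (M + δ))).mono fun _ hp => by
      linarith [hX.le_gromovProd hp.1 hp.2]

theorem IsGeodesicSpace.exists_gromovProd_eq (hX : IsGeodesicSpace X) (w y : X) {t : ℝ}
    (ht₀ : 0 ≤ t) (ht : t ≤ dist y w) : ∃ p, dist p w = t ∧ gromovProd w y p = t := by
  obtain ⟨γ, hγ₀, hγy, hγ⟩ := hX w y
  rw [dist_comm] at ht
  have hmem : t ∈ Set.Icc 0 (dist w y) := ⟨ht₀, ht⟩
  have hw : dist (γ t) w = t := by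
    rw [← hγ₀, hγ t hmem 0 ⟨le_rfl, dist_nonneg⟩, sub_zero, abs_of_nonneg ht₀]
  have hy : dist y (γ t) = dist w y - t := by
    rw [← hγy, hγ _ ⟨dist_nonneg, le_rfl⟩ t hmem, hγy, abs_of_nonneg (by linarith)]
  refine ⟨γ t, hw, ?_⟩
  rw [gromovProd, hw, hy, dist_comm y w]
  ring

theorem exists_tendsto_dist_atTop_of_not_isBounded_range {ι : Type*} {a : ι → X} (w : X)
    (ha : ¬ Bornology.IsBounded (Set.range a)) :
    ∃ m : ℕ → ι, Tendsto (fun i => dist (a (m i)) w) atTop atTop := by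
  have hfar : ∀ i : ℕ, ∃ n, (i : ℝ) ≤ dist (a n) w := by
    by_contra! hnear
    obtain ⟨i, hi⟩ := hnear
    exact ha ((isBounded_iff_subset_closedBall w).2
      ⟨i, by rintro _ ⟨n, rfl⟩; exact mem_closedBall.2 (hi n).le⟩)
  choose m hm using hfar
  exact ⟨m, tendsto_atTop_mono hm tendsto_natCast_atTop_atTop⟩

theorem exists_strictMono_tendsto_of_mem_isCompact {Y : Type*} [TopologicalSpace Y]
    [FirstCountableTopology Y] {K : ℕ → Set Y} (hK : ∀ k, IsCompact (K k)) {u : ℕ → ℕ → Y}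
    (hu : ∀ i k, u i k ∈ K k) :
    ∃ (q : ℕ → Y) (φ : ℕ → ℕ), StrictMono φ ∧
      ∀ k, Tendsto (fun i => u (φ i) k) atTop (𝓝 (q k)) := by
  obtain ⟨q, -, φ, hφ, hq⟩ := (isCompact_univ_pi hK).tendsto_subseq (x := u)
    fun i => Set.mem_univ_pi.2 (hu i)
  exact ⟨q, φ, hφ, tendsto_pi_nhds.1 hq⟩

theorem IsGeodesicSpace.exists_strictMono_tendsto_gromovProd_atTop [ProperSpace X] {δ : ℝ}
    (hgeo : IsGeodesicSpace X) (hX : IsGromovHyperbolic X δ) {w : X} {a : ℕ → X}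
    (ha : Tendsto (fun i => dist (a i) w) atTop atTop) :
    ∃ φ : ℕ → ℕ, StrictMono φ ∧
      Tendsto (fun p : ℕ × ℕ => gromovProd w (a (φ p.1)) (a (φ p.2))) atTop atTop := by
  have hgeod : ∀ i (k : ℕ), ∃ p, dist p w = min (k : ℝ) (dist (a i) w) ∧
      gromovProd w (a i) p = min (k : ℝ) (dist (a i) w) := fun i k =>
    hgeo.exists_gromovProd_eq w (a i) (le_min k.cast_nonneg dist_nonneg) (min_le_right _ _)
  choose p hpw hpa using hgeod
  obtain ⟨q, φ, hφ, hq⟩ := exists_strictMono_tendsto_of_mem_isCompact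
    (fun k => isCompact_closedBall w k)
    fun i k => mem_closedBall.2 ((hpw i k).trans_le (min_le_left _ _))
  refine ⟨φ, hφ, tendsto_atTop.2 fun M => ?_⟩
  obtain ⟨k, hk⟩ := exists_nat_ge (M + 1 + δ)
  have hnear : ∀ᶠ i in atTop, (k : ℝ) - 1 ≤ gromovProd w (a (φ i)) (q k) := by
    filter_upwards [(hq k).eventually (ball_mem_nhds (q k) one_pos),
      (ha.comp hφ.tendsto_atTop).eventually_ge_atTop (k : ℝ)] with i hball hfar
    have hlip := gromovProd_le_add_dist w (a (φ i)) (p (φ i) k) (q k)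
    rw [hpa, min_eq_left (show (k : ℝ) ≤ dist (a (φ i)) w from hfar)] at hlip
    linarith [mem_ball.1 hball]
  rw [← prod_atTop_atTop_eq]
  filter_upwards [hnear.prod_mk hnear] with ij hij
  have := hX.le_gromovProd hij.1 (hij.2.trans_eq (gromovProd_comm _ _ _))
  linarith

theorem IsGromovHyperbolic.tendsto_gromovProd_atTop_of_dist_le {δ R : ℝ}
    (hX : IsGromovHyperbolic X δ) {w : X} {a b : ℕ → X}
    (ha : Tendsto (fun p : ℕ × ℕ => gromovProd w (a p.1) (a p.2)) atTop atTop)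
    (hab : ∀ j, dist (a j) (b j) ≤ R) :
    Tendsto (fun p : ℕ × ℕ => gromovProd w (a p.1) (b p.2)) atTop atTop := by
  have hself : Tendsto (fun j => gromovProd w (a j) (a j)) atTop atTop :=
    ha.comp tendsto_atTop_diagonal
  have hdiag : Tendsto (fun j => gromovProd w (a j) (b j)) atTop atTop := by
    refine tendsto_atTop_mono (fun j => ?_) (tendsto_atTop_add_const_right _ (-R) hself)
    linarith [gromovProd_le_add_dist w (a j) (a j) (b j), hab j]
  rw [← prod_atTop_atTop_eq] at ha ⊢
  exact hX.tendsto_gromovProd_atTop ha (hdiag.comp tendsto_snd)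

end

theorem close_implies_gromov_close_general {X : Type*} [MetricSpace X] [ProperSpace X]
    (hgeo : IsGeodesicSpace X) (δ : ℝ)
    (hhyp : ∀ w x y z : X,
      gromovProd w x y ≥ min (gromovProd w x z) (gromovProd w z y) - δ)
    (x₀ : X) (A B : Set X) (h : Close A B) :
    ∃ a b : ℕ → X, (∀ i, a i ∈ A) ∧ (∀ j, b j ∈ B) ∧
      ∀ M ≥ (0:ℝ), ∃ N : ℕ, ∀ i ≥ N, ∀ j ≥ N, gromovProd x₀ (a i) (b j) ≥ M := by
  obtain ⟨R, -, a, b, ha, hb, hab, hunbdd⟩ := h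
  have hX : IsGromovHyperbolic X δ := hhyp
  obtain ⟨m, hm⟩ := exists_tendsto_dist_atTop_of_not_isBounded_range x₀ hunbdd
  obtain ⟨φ, -, haa⟩ := hgeo.exists_strictMono_tendsto_gromovProd_atTop (a := a ∘ m) hX hm
  have hlim := hX.tendsto_gromovProd_atTop_of_dist_le (a := a ∘ m ∘ φ) (b := b ∘ m ∘ φ) haa
    fun j => hab _
  refine ⟨a ∘ m ∘ φ, b ∘ m ∘ φ, fun i => ha _, fun j => hb _, fun M _ => ?_⟩
  obtain ⟨⟨N₁, N₂⟩, hN⟩ := eventually_atTop.1 (tendsto_atTop.1 hlim M)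
  exact ⟨max N₁ N₂, fun i hi j hj => hN (i, j) ⟨le_of_max_le_left hi, le_of_max_le_right hj⟩⟩

/-- in a proper geodesic hyperbolic space, `A ≍ B` implies `A ≍_g B`. -/
theorem close_implies_gromov_close {X : Type*} [MetricSpace X] [ProperSpace X]
    (hgeo : IsGeodesicSpace X) (δ : ℝ) (hδ : 0 ≤ δ)
    (hhyp : ∀ w x y z : X,
      gromovProd w x y ≥ min (gromovProd w x z) (gromovProd w z y) - δ)
    (x₀ : X) (A B : Set X) (h : Close A B) :
    ∃ a b : ℕ → X, (∀ i, a i ∈ A) ∧ (∀ j, b j ∈ B) ∧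
      ∀ M ≥ (0:ℝ), ∃ N : ℕ, ∀ i ≥ N, ∀ j ≥ N, gromovProd x₀ (a i) (b j) ≥ M :=
  close_implies_gromov_close_general hgeo δ hhyp x₀ A B h
end
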